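/- Higher-order MacWilliams identities: if C ⊆ F_2^n is a linear code, then for every symmetric difference configuration h of level ℓ, the configuration profile of the dual code satisfies a^{C^⊥}_h = (1/|C|^ℓ) · ∑_g K_h(g) · a^C_g, where the sum is over all symmetric difference configurations g of level ℓ. -/
import Mathlib


open Finset

/-- Symmetric difference configuration. -/
def sdConfig (n ℓ : ℕ) (z : Fin ℓ → (Fin n → ZMod 2)) : Finset (Fin ℓ) → ℕ :=
  fun J => hammingNorm (∑ j ∈ J, z j)

/-- `(-1)^{⟨x,y⟩}` for `x, y ∈ 𝔽₂ⁿ`. -/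
def chiPair {n : ℕ} (x y : Fin n → ZMod 2) : ℤ :=
  (-1) ^ (univ.filter (fun i : Fin n => x i = 1 ∧ y i = 1)).card

/-- `∏_{j=1}^ℓ (-1)^{⟨x_j, y_j⟩}`. -/
def tupleChi {n ℓ : ℕ} (x y : Fin ℓ → (Fin n → ZMod 2)) : ℤ :=
  ∏ j : Fin ℓ, chiPair (x j) (y j)

/-- The higher-order Krawtchouk polynomial `K_h(g)`: the sum of `∏_j (-1)^{⟨x_j,y_j⟩}` over
all tuples `y` with configuration `h`, where `x` is any tuple with configuration `g`. -/
noncomputable def kraw (n ℓ : ℕ) (h g : Finset (Fin ℓ) → ℕ) : ℤ :=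
  if hg : ∃ x : Fin ℓ → (Fin n → ZMod 2), sdConfig n ℓ x = g then
    ∑ y ∈ univ.filter (fun y : Fin ℓ → (Fin n → ZMod 2) => sdConfig n ℓ y = h),
      tupleChi hg.choose y
  else 0


/-- The dual code of a set of words: all words orthogonal to every codeword. -/
def dualCode (n : ℕ) (C : Set (Fin n → ZMod 2)) : Set (Fin n → ZMod 2) :=
  {x | ∀ y ∈ C, ∑ i : Fin n, x i * y i = 0}

/-- The `ℓ`-configuration profile of a linear code: `a^C_g` counts the `ℓ`-tuples of
codewords with symmetric difference configuration `g`. -/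
noncomputable def profileLin (n ℓ : ℕ) (C : Set (Fin n → ZMod 2))
    (g : Finset (Fin ℓ) → ℕ) : ℕ :=
  Nat.card {z : Fin ℓ → (Fin n → ZMod 2) // (∀ j, z j ∈ C) ∧ sdConfig n ℓ z = g}

section Aux
variable {n ℓ : ℕ}

lemma zmod2_cases : ∀ a : ZMod 2, a = 0 ∨ a = 1 := by decide

lemma zmod2_add_val : ∀ s t : ZMod 2,
    ((-1:ℤ)) ^ (s + t).val = (-1) ^ s.val * (-1) ^ t.val := by decide

lemma zmod2_ne_zero : ∀ a : ZMod 2, a ≠ 0 → a = 1 := by decide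

lemma zmod2_add_self : ∀ a : ZMod 2, a + a = 0 := by decide

lemma zmod2_add_eq_zero_iff : ∀ a b : ZMod 2, (a + b = 0 ↔ b = a) := by decide

lemma zmod2_pow_val : ∀ a : ZMod 2,
    ((-1:ℤ)) ^ a.val = 1 - 2 * (if a ≠ 0 then 1 else 0) := by decide

lemma chiPair_eq (x y : Fin n → ZMod 2) :
    chiPair x y = (-1) ^ (∑ i, x i * y i).val := by
  have h1 : (∑ i, x i * y i)
      = (((univ.filter (fun i : Fin n => x i = 1 ∧ y i = 1)).card : ℕ) : ZMod 2) := by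
    rw [← Finset.sum_boole]
    refine Finset.sum_congr rfl fun i _ => ?_
    rcases zmod2_cases (x i) with h | h <;> rcases zmod2_cases (y i) with h' | h' <;>
      simp [h, h']
  rw [chiPair, h1, ZMod.val_natCast, ← neg_one_pow_eq_pow_mod_two]

lemma chiPair_add_left (a b y : Fin n → ZMod 2) :
    chiPair (a + b) y = chiPair a y * chiPair b y := by
  rw [chiPair_eq, chiPair_eq, chiPair_eq, ← zmod2_add_val]
  congr 1
  rw [← Finset.sum_add_distrib]
  refine congrArg ZMod.val (Finset.sum_congr rfl fun i _ => ?_)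
  simp [add_mul]

end Aux

section Aux2
variable {n ℓ : ℕ}

lemma pi_add_self (c : Fin n → ZMod 2) : c + c = 0 :=
  funext fun i => zmod2_add_self (c i)

lemma char_sum (C : Submodule (ZMod 2) (Fin n → ZMod 2))
    [DecidablePred (· ∈ (C : Set (Fin n → ZMod 2)))] (w : Fin n → ZMod 2)
    [Decidable (w ∈ dualCode n (C : Set (Fin n → ZMod 2)))] :
    ∑ c ∈ univ.filter (· ∈ (C : Set (Fin n → ZMod 2))), chiPair c w =
      if w ∈ dualCode n (C : Set (Fin n → ZMod 2)) then
        (((univ.filter (· ∈ (C : Set (Fin n → ZMod 2)))).card : ℤ)) else 0 := by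
  by_cases hw : w ∈ dualCode n (C : Set (Fin n → ZMod 2))
  · rw [if_pos hw]
    have h1 : ∀ c ∈ univ.filter (· ∈ (C : Set (Fin n → ZMod 2))), chiPair c w = 1 := by
      intro c hc
      have hc' : c ∈ (C : Set (Fin n → ZMod 2)) := (Finset.mem_filter.mp hc).2
      rw [chiPair_eq]
      have h0 : ∑ i, c i * w i = 0 := by
        rw [← hw c hc']
        exact Finset.sum_congr rfl fun i _ => mul_comm _ _
      rw [h0]
      rfl
    rw [Finset.sum_congr rfl h1, Finset.sum_const, nsmul_eq_mul, mul_one]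
  · rw [if_neg hw]
    obtain ⟨c0, hc0C, hc0⟩ : ∃ c0 ∈ (C : Set (Fin n → ZMod 2)), ∑ i, w i * c0 i ≠ 0 := by
      by_contra hcon
      push_neg at hcon
      exact hw fun c hc => hcon c hc
    have hneg : ∀ c, chiPair (c + c0) w = - chiPair c w := by
      intro c
      rw [chiPair_add_left]
      have h2 : chiPair c0 w = -1 := by
        rw [chiPair_eq]
        have h3 : ∑ i, c0 i * w i = 1 := by
          rw [show (∑ i, c0 i * w i) = ∑ i, w i * c0 i from
            Finset.sum_congr rfl fun i _ => mul_comm _ _]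
          exact zmod2_ne_zero _ hc0
        rw [h3]
        rfl
      rw [h2]
      ring
    have hswap : ∑ c ∈ univ.filter (· ∈ (C : Set (Fin n → ZMod 2))), chiPair (c + c0) w
        = ∑ c ∈ univ.filter (· ∈ (C : Set (Fin n → ZMod 2))), chiPair c w := by
      refine Finset.sum_equiv (Equiv.addRight c0) (fun c => ?_) (fun c _ => rfl)
      simp only [Finset.mem_filter, Finset.mem_univ, true_and, Equiv.coe_addRight,
        SetLike.mem_coe]
      constructor
      · intro hc
        exact C.add_mem hc hc0C
      · intro hc
        have := C.add_mem hc hc0C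
        rwa [add_assoc, pi_add_self, add_zero] at this
    have : ∑ c ∈ univ.filter (· ∈ (C : Set (Fin n → ZMod 2))), chiPair c w
        = - ∑ c ∈ univ.filter (· ∈ (C : Set (Fin n → ZMod 2))), chiPair c w := by
      conv_lhs => rw [← hswap]
      rw [Finset.sum_congr rfl fun c _ => hneg c, Finset.sum_neg_distrib]
    linarith

end Aux2

section Aux3
variable {n ℓ : ℕ}

lemma sum_sign (ℓ : ℕ) (u : Fin ℓ → ZMod 2) :
    ∑ J : Finset (Fin ℓ), ((-1:ℤ)) ^ (∑ j ∈ J, u j).val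
      = if u = 0 then 2 ^ ℓ else 0 := by
  classical
  by_cases hu : u = 0
  · subst hu
    rw [if_pos rfl]
    have h1 : ∀ J : Finset (Fin ℓ), ((-1:ℤ)) ^ (∑ j ∈ J, (0 : Fin ℓ → ZMod 2) j).val = 1 := by
      intro J
      simp
    rw [Finset.sum_congr rfl fun J _ => h1 J, Finset.sum_const, Finset.card_univ,
      Fintype.card_finset, Fintype.card_fin, nsmul_eq_mul, mul_one]
    push_cast
    ring
  · rw [if_neg hu]
    obtain ⟨j0, hj0⟩ : ∃ j0, u j0 ≠ 0 := by
      by_contra hcon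
      push_neg at hcon
      exact hu (funext hcon)
    have hu1 : u j0 = 1 := zmod2_ne_zero _ hj0
    set e : Finset (Fin ℓ) → Finset (Fin ℓ) :=
      fun J => if j0 ∈ J then J.erase j0 else insert j0 J with he
    have hinv : Function.Involutive e := by
      intro J
      by_cases hJ : j0 ∈ J
      · simp [he, hJ, Finset.notMem_erase, Finset.insert_erase]
      · simp [he, hJ, Finset.mem_insert_self, Finset.erase_insert]
    have hsum : ∀ J : Finset (Fin ℓ), ∑ j ∈ e J, u j = (∑ j ∈ J, u j) + 1 := by
      intro J
      by_cases hJ : j0 ∈ J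
      · have h1 : ∑ j ∈ J.erase j0, u j + u j0 = ∑ j ∈ J, u j :=
          Finset.sum_erase_add _ _ hJ
        have h11 : (1 : ZMod 2) + 1 = 0 := by decide
        simp only [he, if_pos hJ]
        rw [← h1, hu1, add_assoc, h11, add_zero]
      · simp only [he, if_neg hJ]
        rw [Finset.sum_insert hJ, hu1, add_comm]
    have hneg : ∀ J : Finset (Fin ℓ), ((-1:ℤ)) ^ (∑ j ∈ e J, u j).val
        = - ((-1:ℤ)) ^ (∑ j ∈ J, u j).val := by
      intro J
      rw [hsum J, zmod2_add_val]
      norm_num [ZMod.val_one]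
    have hS : ∑ J : Finset (Fin ℓ), ((-1:ℤ)) ^ (∑ j ∈ e J, u j).val
        = ∑ J : Finset (Fin ℓ), ((-1:ℤ)) ^ (∑ j ∈ J, u j).val := by
      have := Equiv.sum_comp (hinv.toPerm e)
        (fun J : Finset (Fin ℓ) => ((-1:ℤ)) ^ (∑ j ∈ J, u j).val)
      simpa using this
    have hfinal : ∑ J : Finset (Fin ℓ), ((-1:ℤ)) ^ (∑ j ∈ J, u j).val
        = - ∑ J : Finset (Fin ℓ), ((-1:ℤ)) ^ (∑ j ∈ J, u j).val := by
      conv_lhs => rw [← hS]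
      rw [Finset.sum_congr rfl fun J _ => hneg J, Finset.sum_neg_distrib]
    linarith

end Aux3

section Aux4
variable {n ℓ : ℕ}

lemma sign_expand (x : Fin ℓ → Fin n → ZMod 2) (J : Finset (Fin ℓ)) :
    ((n:ℤ)) - 2 * (sdConfig n ℓ x J : ℤ)
      = ∑ i : Fin n, ((-1:ℤ)) ^ (∑ j ∈ J, x j i).val := by
  classical
  have h1 : ∀ i : Fin n, ((-1:ℤ)) ^ (∑ j ∈ J, x j i).val
      = 1 - 2 * (if (∑ j ∈ J, x j i) ≠ 0 then 1 else 0) := fun i => zmod2_pow_val _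
  rw [Finset.sum_congr rfl fun i _ => h1 i, Finset.sum_sub_distrib, Finset.sum_const,
    ← Finset.mul_sum, Finset.sum_boole]
  simp only [sdConfig, hammingNorm, nsmul_eq_mul, mul_one, Finset.card_univ, Fintype.card_fin]
  congr 2
  · norm_cast
    exact congrArg Finset.card (Finset.filter_congr fun i _ => by rw [Finset.sum_apply])

lemma fiber_count (x : Fin ℓ → Fin n → ZMod 2) (v : Fin ℓ → ZMod 2)
    [DecidablePred fun i : Fin n => (fun j => x j i) = v] :
    (2 ^ ℓ : ℤ) * ((univ.filter fun i : Fin n => (fun j => x j i) = v).card : ℤ)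
      = ∑ J : Finset (Fin ℓ),
          ((-1:ℤ)) ^ (∑ j ∈ J, v j).val * ((n:ℤ) - 2 * (sdConfig n ℓ x J : ℤ)) := by
  classical
  have step : ∀ J : Finset (Fin ℓ),
      ((-1:ℤ)) ^ (∑ j ∈ J, v j).val * ((n:ℤ) - 2 * (sdConfig n ℓ x J : ℤ))
        = ∑ i : Fin n, ((-1:ℤ)) ^ (∑ j ∈ J, (v j + x j i)).val := by
    intro J
    rw [sign_expand, Finset.mul_sum]
    refine Finset.sum_congr rfl fun i _ => ?_
    rw [Finset.sum_add_distrib, zmod2_add_val]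
  rw [Finset.sum_congr rfl fun J _ => step J, Finset.sum_comm]
  have inner : ∀ i : Fin n,
      (∑ J : Finset (Fin ℓ), ((-1:ℤ)) ^ (∑ j ∈ J, (v j + x j i)).val)
        = if (fun j => x j i) = v then (2 ^ ℓ : ℤ) else 0 := by
    intro i
    rw [sum_sign ℓ (fun j => v j + x j i)]
    refine if_congr ?_ rfl rfl
    rw [funext_iff, funext_iff]
    exact forall_congr' fun j => by rw [Pi.zero_apply, zmod2_add_eq_zero_iff]
  rw [Finset.sum_congr rfl fun i _ => inner i, Finset.sum_ite, Finset.sum_const_zero,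
    add_zero, Finset.sum_const, nsmul_eq_mul, mul_comm]

lemma fiber_card_eq (x x' : Fin ℓ → Fin n → ZMod 2)
    (hx : sdConfig n ℓ x = sdConfig n ℓ x') (v : Fin ℓ → ZMod 2)
    [DecidablePred fun i : Fin n => (fun j => x j i) = v]
    [DecidablePred fun i : Fin n => (fun j => x' j i) = v] :
    (univ.filter fun i : Fin n => (fun j => x j i) = v).card
      = (univ.filter fun i : Fin n => (fun j => x' j i) = v).card := by
  have h1 := fiber_count x v
  have h2 := fiber_count x' v
  rw [hx] at h1
  have h3 := h1.trans h2.symm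
  have h2ℓ : (2 ^ ℓ : ℤ) ≠ 0 := by positivity
  exact_mod_cast mul_left_cancel₀ h2ℓ h3

lemma exists_perm (x x' : Fin ℓ → Fin n → ZMod 2)
    (hx : sdConfig n ℓ x = sdConfig n ℓ x') :
    ∃ σ : Equiv.Perm (Fin n), ∀ j i, x' j i = x j (σ i) := by
  classical
  have hcard : ∀ v : Fin ℓ → ZMod 2,
      Fintype.card {i : Fin n // (fun j => x' j i) = v}
        = Fintype.card {i : Fin n // (fun j => x j i) = v} := by
    intro v
    rw [Fintype.card_subtype, Fintype.card_subtype]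
    exact (fiber_card_eq x x' hx v).symm
  let e : ∀ v : Fin ℓ → ZMod 2,
      {i : Fin n // (fun j => x' j i) = v} ≃ {i : Fin n // (fun j => x j i) = v} :=
    fun v => Fintype.equivOfCardEq (hcard v)
  refine ⟨Equiv.ofFiberEquiv e, fun j i => ?_⟩
  have h := Equiv.ofFiberEquiv_map e i
  exact (congrFun h j).symm

end Aux4

section Aux5
variable {n ℓ : ℕ}

lemma hammingNorm_permComp (w : Fin n → ZMod 2) (τ : Equiv.Perm (Fin n)) :
    hammingNorm (fun i => w (τ i)) = hammingNorm w := by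
  simp only [hammingNorm]
  refine Finset.card_bij' (fun i _ => τ i) (fun i _ => τ.symm i) ?_ ?_ ?_ ?_ <;>
    simp [Finset.mem_filter]

lemma sdConfig_comp (y : Fin ℓ → Fin n → ZMod 2) (τ : Equiv.Perm (Fin n)) :
    sdConfig n ℓ (fun j => fun i => y j (τ i)) = sdConfig n ℓ y := by
  funext J
  simp only [sdConfig]
  rw [← hammingNorm_permComp (∑ j ∈ J, y j) τ]
  congr 1
  funext i
  simp [Finset.sum_apply]

lemma chiPair_comp (a b : Fin n → ZMod 2) (τ : Equiv.Perm (Fin n)) :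
    chiPair (fun i => a (τ i)) b = chiPair a (fun i => b (τ.symm i)) := by
  unfold chiPair
  congr 1
  refine Finset.card_bij' (fun i _ => τ i) (fun i _ => τ.symm i) ?_ ?_ ?_ ?_ <;>
    simp [Finset.mem_filter]

lemma sum_tupleChi_eq (h : Finset (Fin ℓ) → ℕ) (x x' : Fin ℓ → Fin n → ZMod 2)
    (hx : sdConfig n ℓ x = sdConfig n ℓ x')
    [DecidablePred fun y : Fin ℓ → Fin n → ZMod 2 => sdConfig n ℓ y = h] :
    ∑ y ∈ univ.filter (fun y : Fin ℓ → (Fin n → ZMod 2) => sdConfig n ℓ y = h), tupleChi x y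
      = ∑ y ∈ univ.filter (fun y : Fin ℓ → (Fin n → ZMod 2) => sdConfig n ℓ y = h),
          tupleChi x' y := by
  classical
  obtain ⟨σ, hσ⟩ := exists_perm x x' hx
  have hx' : ∀ j, x' j = fun i => x j (σ i) := fun j => funext fun i => hσ j i
  let e : (Fin ℓ → Fin n → ZMod 2) ≃ (Fin ℓ → Fin n → ZMod 2) :=
    { toFun := fun y => fun j => fun i => y j (σ.symm i)
      invFun := fun y => fun j => fun i => y j (σ i)
      left_inv := fun y => by funext j i; simp
      right_inv := fun y => by funext j i; simp }
  refine (Finset.sum_equiv e ?_ ?_).symm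
  · intro y
    simp only [Finset.mem_filter, Finset.mem_univ, true_and, e, Equiv.coe_fn_mk]
    rw [sdConfig_comp y σ.symm]
  · intro y _
    unfold tupleChi
    refine Finset.prod_congr rfl fun j _ => ?_
    rw [hx' j, chiPair_comp (x j) (y j) σ]
    rfl

end Aux5

/-- Higher-order MacWilliams identities: for a linear code `C ⊆ 𝔽₂ⁿ` and any symmetric
difference configuration `h` of level `ℓ`,
`a^{C^⊥}_h = |C|^{-ℓ} ∑_g K_h(g) a^C_g`, summing over all configurations `g`. -/
theorem higher_macwilliams_identity (n ℓ : ℕ) (C : Submodule (ZMod 2) (Fin n → ZMod 2))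
    (h : Finset (Fin ℓ) → ℕ) (hh : ∃ z : Fin ℓ → (Fin n → ZMod 2), sdConfig n ℓ z = h) :
    (profileLin n ℓ (dualCode n (C : Set (Fin n → ZMod 2))) h : ℚ) =
      (1 / (Nat.card C : ℚ) ^ ℓ) *
        ∑ g ∈ Finset.image (sdConfig n ℓ) univ,
          (kraw n ℓ h g : ℚ) * (profileLin n ℓ (C : Set (Fin n → ZMod 2)) g : ℚ) := by
  classical
  set D : Set (Fin n → ZMod 2) := dualCode n (C : Set (Fin n → ZMod 2)) with hD
  set H : Finset (Fin ℓ → Fin n → ZMod 2) :=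
    univ.filter (fun y => sdConfig n ℓ y = h) with hH
  set Cset : Finset (Fin ℓ → Fin n → ZMod 2) :=
    univ.filter (fun z => ∀ j, z j ∈ (C : Set (Fin n → ZMod 2))) with hCset
  set Cfin : Finset (Fin n → ZMod 2) :=
    univ.filter (· ∈ (C : Set (Fin n → ZMod 2))) with hCfin
  have hprofile : ∀ (S : Set (Fin n → ZMod 2)) (g : Finset (Fin ℓ) → ℕ),
      profileLin n ℓ S g = (univ.filter (fun z : Fin ℓ → Fin n → ZMod 2 =>
        (∀ j, z j ∈ S) ∧ sdConfig n ℓ z = g)).card := by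
    intro S g
    rw [profileLin, Nat.card_eq_fintype_card, Fintype.card_subtype]
  -- the key identity over ℤ
  have key : ∑ g ∈ Finset.image (sdConfig n ℓ) univ,
      kraw n ℓ h g * (profileLin n ℓ (C : Set (Fin n → ZMod 2)) g : ℤ)
      = (Cfin.card : ℤ) ^ ℓ * (profileLin n ℓ D h : ℤ) := by
    have step1 : ∀ g ∈ Finset.image (sdConfig n ℓ)
        (univ : Finset (Fin ℓ → Fin n → ZMod 2)),
        kraw n ℓ h g * (profileLin n ℓ (C : Set (Fin n → ZMod 2)) g : ℤ)
          = ∑ z ∈ Cset.filter (fun z => sdConfig n ℓ z = g), ∑ y ∈ H, tupleChi z y := by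
      intro g hg
      obtain ⟨x0, -, hx0⟩ := Finset.mem_image.mp hg
      have hex : ∃ x : Fin ℓ → (Fin n → ZMod 2), sdConfig n ℓ x = g := ⟨x0, hx0⟩
      have hkraw : ∀ z : Fin ℓ → Fin n → ZMod 2, sdConfig n ℓ z = g →
          kraw n ℓ h g = ∑ y ∈ H, tupleChi z y := by
        intro z hz
        rw [kraw, dif_pos hex]
        exact sum_tupleChi_eq h hex.choose z (hex.choose_spec.trans hz.symm)
      have hcard : (profileLin n ℓ (C : Set (Fin n → ZMod 2)) g : ℤ)
          = ((Cset.filter (fun z => sdConfig n ℓ z = g)).card : ℤ) := by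
        rw [hprofile]
        norm_cast
        rw [hCset, Finset.filter_filter]
      rw [hcard,
        Finset.sum_congr rfl (fun z hz => (hkraw z (Finset.mem_filter.mp hz).2).symm),
        Finset.sum_const, nsmul_eq_mul, mul_comm]
    have step2 : ∑ g ∈ Finset.image (sdConfig n ℓ) univ,
        ∑ z ∈ Cset.filter (fun z => sdConfig n ℓ z = g), (∑ y ∈ H, tupleChi z y)
        = ∑ z ∈ Cset, ∑ y ∈ H, tupleChi z y :=
      Finset.sum_fiberwise_of_maps_to
        (fun z _ => Finset.mem_image_of_mem _ (Finset.mem_univ z)) _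
    have hCpi : Cset = Fintype.piFinset (fun _ : Fin ℓ => Cfin) := by
      ext z
      simp [hCset, hCfin, Fintype.mem_piFinset]
    have step3 : ∀ y : Fin ℓ → Fin n → ZMod 2,
        ∑ z ∈ Cset, tupleChi z y = ∏ j : Fin ℓ, ∑ c ∈ Cfin, chiPair c (y j) := by
      intro y
      rw [Finset.prod_univ_sum, ← hCpi]
      exact Finset.sum_congr rfl fun z _ => rfl
    have step5 : ∀ y : Fin ℓ → Fin n → ZMod 2,
        (∏ j : Fin ℓ, ∑ c ∈ Cfin, chiPair c (y j))
          = if (∀ j, y j ∈ D) then (Cfin.card : ℤ) ^ ℓ else 0 := by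
      intro y
      rw [Finset.prod_congr rfl (fun j _ => char_sum C (y j))]
      by_cases hy : ∀ j, y j ∈ D
      · rw [if_pos hy, Finset.prod_congr rfl (fun j _ => if_pos (hy j)),
          Finset.prod_const, Finset.card_univ, Fintype.card_fin]
      · rw [if_neg hy]
        push_neg at hy
        obtain ⟨j0, hj0⟩ := hy
        exact Finset.prod_eq_zero (Finset.mem_univ j0) (if_neg hj0)
    calc ∑ g ∈ Finset.image (sdConfig n ℓ) univ,
            kraw n ℓ h g * (profileLin n ℓ (C : Set (Fin n → ZMod 2)) g : ℤ)
        = ∑ g ∈ Finset.image (sdConfig n ℓ) univ,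
            ∑ z ∈ Cset.filter (fun z => sdConfig n ℓ z = g), ∑ y ∈ H, tupleChi z y :=
          Finset.sum_congr rfl step1
      _ = ∑ z ∈ Cset, ∑ y ∈ H, tupleChi z y := step2
      _ = ∑ y ∈ H, ∑ z ∈ Cset, tupleChi z y := Finset.sum_comm
      _ = ∑ y ∈ H, if (∀ j, y j ∈ D) then (Cfin.card : ℤ) ^ ℓ else 0 :=
          Finset.sum_congr rfl fun y _ => (step3 y).trans (step5 y)
      _ = (Cfin.card : ℤ) ^ ℓ * ((H.filter (fun y => ∀ j, y j ∈ D)).card : ℤ) := by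
          rw [Finset.sum_ite, Finset.sum_const_zero, add_zero, Finset.sum_const,
            nsmul_eq_mul, mul_comm]
      _ = (Cfin.card : ℤ) ^ ℓ * (profileLin n ℓ D h : ℤ) := by
          congr 1
          rw [hprofile]
          norm_cast
          rw [hH, Finset.filter_filter]
          exact congrArg Finset.card (Finset.filter_congr fun z _ => by tauto)
  -- identify |C| with Cfin.card
  have hM : Nat.card C = Cfin.card := by
    rw [Nat.card_eq_fintype_card, hCfin]
    rw [show (Fintype.card C) = Fintype.card {x : Fin n → ZMod 2 // x ∈ C} from rfl,
      Fintype.card_subtype]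
    exact congrArg Finset.card (Finset.filter_congr fun z _ => by simp)
  have hM0 : 0 < Nat.card C := Nat.card_pos
  -- cast to ℚ
  have keyQ := congrArg (fun t : ℤ => (t : ℚ)) key
  push_cast at keyQ
  rw [← hM] at keyQ
  rw [keyQ]
  have hne : ((Nat.card C : ℚ)) ^ ℓ ≠ 0 := by positivity
  field_simp
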